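/- For all nonnegative integers n and d, in ℚ[x] one has det(M_d) = det(M_d') · ∏_{s=0}^{2n−2} (x − s/2)^{f(d,s)}, where det(M_d) is regarded as an element of ℚ[x] via the inclusion ℤ[x] ⊂ ℚ[x]. -/

import Mathlib

open Finset Polynomial

namespace Capelli

/-- The set `ℙ_{k,n}` of pairs `μ = (μ₁, μ₂)` of nonnegative integers with `μ₁ ≥ μ₂`,
`μ₁ + μ₂ = k` and `μ₂ ≤ n`. -/
def Pkn (n k : ℕ) : Finset (ℕ × ℕ) :=
  (Finset.range (k + 1) ×ˢ Finset.range (k + 1)).filter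
    (fun μ => μ.2 ≤ μ.1 ∧ μ.1 + μ.2 = k ∧ μ.2 ≤ n)

/-- The set `ℙ*_{k,n}` of pairs `ν = (ν₁, ν₂)` of nonnegative integers with `ν₁ ≥ ν₂`,
`ν₁ + ν₂ = k` and `ν₂ ≥ ⌊k/2⌋ - n` (written here additively to avoid truncated subtraction). -/
def PknStar (n k : ℕ) : Finset (ℕ × ℕ) :=
  (Finset.range (k + 1) ×ˢ Finset.range (k + 1)).filter
    (fun ν => ν.2 ≤ ν.1 ∧ ν.1 + ν.2 = k ∧ k / 2 ≤ ν.2 + n)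

/-- `Λ_{d,n} = ⋃_{k=0}^d ℙ_{k,n}`. -/
def Lam (n d : ℕ) : Finset (ℕ × ℕ) := (Finset.range (d + 1)).biUnion (Pkn n)

/-- `Λ*_{d,n} = ⋃_{k=0}^d ℙ*_{k,n}`. -/
def LamStar (n d : ℕ) : Finset (ℕ × ℕ) := (Finset.range (d + 1)).biUnion (PknStar n)

/-- `ℓ_ν = min(ν₁ - ν₂, 2n + 1 - (ν₁ - ν₂))`. -/
def ell (n : ℕ) (ν : ℕ × ℕ) : ℕ := min (ν.1 - ν.2) (2 * n + 1 - (ν.1 - ν.2))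

/-- `Λ_{d,n,j} = {μ ∈ Λ_{d,n} : μ₂ ≥ j}`. -/
def Lamj (n d j : ℕ) : Finset (ℕ × ℕ) := (Lam n d).filter (fun μ => j ≤ μ.2)

/-- `Λ*_{d,n,j} = {ν ∈ Λ*_{d,n} : ν₂ ≤ ⌊|ν|/2⌋ - j}`. -/
def LamStarj (n d j : ℕ) : Finset (ℕ × ℕ) :=
  (LamStar n d).filter (fun ν => ν.2 + j ≤ (ν.1 + ν.2) / 2)

/-- `ν_{(j)} = (|ν| - ⌊|ν|/2⌋ + j, ⌊|ν|/2⌋ - j)`. -/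
def nuSub (ν : ℕ × ℕ) (j : ℕ) : ℕ × ℕ :=
  (ν.1 + ν.2 - (ν.1 + ν.2) / 2 + j, (ν.1 + ν.2) / 2 - j)

/-- The polynomial `λ_{μ,ν}(x) = ((2x+1)ℓ_ν - ℓ_ν²)^{μ₂} (ν₁+ν₂)^{μ₁-μ₂} ∈ ℤ[x]`. -/
noncomputable def lamPoly (n : ℕ) (μ ν : ℕ × ℕ) : Polynomial ℤ :=
  ((2 * X + 1) * C (ell n ν : ℤ) - C ((ell n ν : ℤ) ^ 2)) ^ μ.2 *
    C ((ν.1 + ν.2 : ℕ) : ℤ) ^ (μ.1 - μ.2)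

/-- The row ordering: `μ ⪯ μ'` iff `μ₂ < μ₂'`, or `μ₂ = μ₂'` and `μ₁ ≤ μ₁'`. -/
def rowRel (μ μ' : ℕ × ℕ) : Prop := μ.2 < μ'.2 ∨ (μ.2 = μ'.2 ∧ μ.1 ≤ μ'.1)

/-- The column ordering: `ν ⩽ ν'` iff `⌊(ν₁-ν₂)/2⌋ < ⌊(ν₁'-ν₂')/2⌋`, or these are equal and
`|ν| ≤ |ν'|`.  (A further tie-break by the first coordinate is added so that the relation is
antisymmetric on all of `ℕ × ℕ`; on `Λ*_{d,n}` a tie in the first two comparisons forces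
equality, so this agrees with the ordering of the paper there.) -/
def colRel (ν ν' : ℕ × ℕ) : Prop :=
  (ν.1 - ν.2) / 2 < (ν'.1 - ν'.2) / 2 ∨
    ((ν.1 - ν.2) / 2 = (ν'.1 - ν'.2) / 2 ∧
      (ν.1 + ν.2 < ν'.1 + ν'.2 ∨ (ν.1 + ν.2 = ν'.1 + ν'.2 ∧ ν.1 ≤ ν'.1)))

instance : DecidableRel rowRel := fun a b =>
  inferInstanceAs (Decidable (a.2 < b.2 ∨ (a.2 = b.2 ∧ a.1 ≤ b.1)))

instance : IsTrans (ℕ × ℕ) rowRel := ⟨by intro a b c; unfold rowRel; omega⟩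

instance : IsTotal (ℕ × ℕ) rowRel := ⟨by intro a b; unfold rowRel; omega⟩

instance : IsAntisymm (ℕ × ℕ) rowRel :=
  ⟨by intro a b h1 h2; unfold rowRel at h1 h2; rw [Prod.ext_iff]; omega⟩

instance : DecidableRel colRel := fun a b =>
  inferInstanceAs (Decidable ((a.1 - a.2) / 2 < (b.1 - b.2) / 2 ∨
    ((a.1 - a.2) / 2 = (b.1 - b.2) / 2 ∧
      (a.1 + a.2 < b.1 + b.2 ∨ (a.1 + a.2 = b.1 + b.2 ∧ a.1 ≤ b.1)))))

instance : IsTrans (ℕ × ℕ) colRel := ⟨by intro a b c; unfold colRel; omega⟩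

instance : IsTotal (ℕ × ℕ) colRel := ⟨by intro a b; unfold colRel; omega⟩

instance : IsAntisymm (ℕ × ℕ) colRel :=
  ⟨by intro a b h1 h2; unfold colRel at h1 h2; rw [Prod.ext_iff]; omega⟩

/-- The elements of `Λ_{d,n}` listed in increasing order for `⪯`. -/
def rowList (n d : ℕ) : List (ℕ × ℕ) := (Lam n d).sort rowRel

/-- The elements of `Λ*_{d,n}` listed in increasing order for `⩽`. -/
def colList (n d : ℕ) : List (ℕ × ℕ) := (LamStar n d).sort colRel

/-- The elements of `Λ_{d,n,j}` listed in increasing order for `⪯`. -/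
def rowListJ (n d j : ℕ) : List (ℕ × ℕ) := (Lamj n d j).sort rowRel

/-- The elements of `Λ*_{d,n,j}` listed in increasing order for `⩽`. -/
def colListJ (n d j : ℕ) : List (ℕ × ℕ) := (LamStarj n d j).sort colRel

/-- The matrix `M_d = [λ_{μ,ν}]` with rows indexed by `Λ_{d,n}` (ordered by `⪯`) and columns
indexed by `Λ*_{d,n}` (ordered by `⩽`); since `|Λ_{d,n}| = |Λ*_{d,n}|` the column list has
length `(Lam n d).card` and the `getD` access below always hits an actual entry. -/
noncomputable def Md (n d : ℕ) : Matrix (Fin (Lam n d).card) (Fin (Lam n d).card) (Polynomial ℤ) :=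
  fun i j => lamPoly n ((rowList n d).getD i.val (0, 0)) ((colList n d).getD j.val (0, 0))

/-- The matrix `M_d' = [(2ℓ_ν)^{μ₂}(ν₁+ν₂)^{μ₁-μ₂}]` of leading coefficients. -/
def Md' (n d : ℕ) : Matrix (Fin (Lam n d).card) (Fin (Lam n d).card) ℤ :=
  fun i j =>
    let μ := (rowList n d).getD i.val (0, 0)
    let ν := (colList n d).getD j.val (0, 0)
    (2 * (ell n ν : ℤ)) ^ μ.2 * ((ν.1 + ν.2 : ℕ) : ℤ) ^ (μ.1 - μ.2)

/-- `S_{μ,ν,j}` with `m = μ₂ - j`: the complete homogeneous symmetric polynomial of degree `m`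
evaluated at `ℓ_{ν_{(0)}}, …, ℓ_{ν_{(j-1)}}, ℓ_ν`, i.e. the sum over all `(j+1)`-tuples
`(a₀, …, a_j)` of nonnegative integers with `a₀ + ⋯ + a_j = m` of
`ℓ_{ν_{(0)}}^{a₀} ⋯ ℓ_{ν_{(j-1)}}^{a_{j-1}} ℓ_ν^{a_j}`. -/
def Shs (n : ℕ) (ν : ℕ × ℕ) (j m : ℕ) : ℕ :=
  ∑ a ∈ Finset.Nat.antidiagonalTuple (j + 1) m,
    ∏ i : Fin (j + 1), (if (i : ℕ) < j then ell n (nuSub ν (i : ℕ)) else ell n ν) ^ a i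

/-- The matrix `N_j = [2^{μ₂-j}(ν₁+ν₂)^{μ₁-μ₂} S_{μ,ν,j}]` with rows indexed by `Λ_{d,n,j}`
(ordered by `⪯`) and columns indexed by `Λ*_{d,n,j}` (ordered by `⩽`). -/
def Ndj (n d j : ℕ) : Matrix (Fin (Lamj n d j).card) (Fin (Lamj n d j).card) ℤ :=
  fun i i' =>
    let μ := (rowListJ n d j).getD i.val (0, 0)
    let ν := (colListJ n d j).getD i'.val (0, 0)
    2 ^ (μ.2 - j) * ((ν.1 + ν.2 : ℕ) : ℤ) ^ (μ.1 - μ.2) * (Shs n ν j (μ.2 - j) : ℤ)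

/-- The Vandermonde matrix `V(a, a+1, …, a+s-1) = [(a+j)^{i-1}]_{1 ≤ i,j ≤ s}` (0-indexed
as `[(a+j)^i]_{0 ≤ i,j ≤ s-1}`), with the convention `0⁰ = 1`. -/
def vandInt (a s : ℕ) : Matrix (Fin s) (Fin s) ℤ :=
  fun i j => ((a + (j : ℕ) : ℕ) : ℤ) ^ (i : ℕ)

/-- `f(d,s) = #{(ν,ν') ∈ Λ*_{d,n} × Λ*_{d,n} : |ν| = |ν'|, ℓ_{ν'} < ℓ_ν, ℓ_ν + ℓ_{ν'} - 1 = s}`. -/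
def fds (n d : ℕ) (s : ℤ) : ℕ :=
  (((LamStar n d) ×ˢ (LamStar n d)).filter
    (fun p => p.1.1 + p.1.2 = p.2.1 + p.2.2 ∧ ell n p.2 < ell n p.1 ∧
      (ell n p.1 : ℤ) + (ell n p.2 : ℤ) - 1 = s)).card

/-- `g_k(s) = #{(ν,ν') ∈ ℙ*_{k,n} × ℙ*_{k,n} : ℓ_{ν'} < ℓ_ν, ℓ_ν + ℓ_{ν'} - 1 = s}`. -/
def gks (n k : ℕ) (s : ℤ) : ℕ :=
  ((PknStar n k ×ˢ PknStar n k).filter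
    (fun p => ell n p.2 < ell n p.1 ∧ (ell n p.1 : ℤ) + (ell n p.2 : ℤ) - 1 = s)).card

end Capelli

/-!
Each entry `λ_{μ,ν}` has degree at most `μ₂` in `x`, and its coefficient of `x^{μ₂}` is the
corresponding entry of `M_d'`; so `det M_d` has degree at most `∑_{μ ∈ Λ_{d,n}} μ₂`, with
coefficient `det M_d'` there.

Since `(2x+1)ℓ - ℓ²` takes the same value at `x = s/2` for `ℓ` and `s + 1 - ℓ`, the columns of
`ν` and `ν'` agree modulo `2x - s` whenever `|ν| = |ν'|` and `ℓ_ν + ℓ_{ν'} - 1 = s`. As `ℓ` is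
injective on each `ℙ*_{k,n}`, such a partner `ν'` of `ν` is unique and is never itself a first
member of a pair; subtracting partner columns therefore extracts `(2x - s)^{f(d,s)}` from
`det M_d`.

Finally `∑ₛ f(d,s) = ∑_{μ ∈ Λ_{d,n}} μ₂`, as both count `(min(⌊k/2⌋, n) + 1).choose 2` for each
`k ≤ d`. Thus `∏ₛ (x - s/2)^{f(d,s)}` is a monic divisor of `det M_d` whose degree bounds that of
`det M_d`, and the quotient is the constant `det M_d'`.
-/

namespace Polynomial

theorem coeff_prod_sum_of_natDegree_le {R ι : Type*} [CommSemiring R] (s : Finset ι)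
    (p : ι → R[X]) (d : ι → ℕ) (h : ∀ i ∈ s, (p i).natDegree ≤ d i) :
    (∏ i ∈ s, p i).coeff (∑ i ∈ s, d i) = ∏ i ∈ s, (p i).coeff (d i) := by
  classical
  induction s using Finset.induction_on with
  | empty => simp
  | insert a s ha ih =>
    have hs : ∀ i ∈ s, (p i).natDegree ≤ d i := fun i hi => h i (mem_insert_of_mem hi)
    rw [prod_insert ha, sum_insert ha, prod_insert ha,
      coeff_mul_add_eq_of_natDegree_le (h a (mem_insert_self a s))
        ((natDegree_prod_le s p).trans (sum_le_sum hs)), ih hs]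

theorem eq_C_coeff_mul_of_monic_of_dvd {R : Type*} [CommSemiring R] {p q : R[X]} (hp : p.Monic)
    (hdvd : p ∣ q) (hdeg : q.natDegree ≤ p.natDegree) : q = C (q.coeff p.natDegree) * p := by
  have hq := eq_leadingCoeff_mul_of_monic_of_dvd_of_natDegree_le hp hdvd hdeg
  have hlc : q.coeff p.natDegree = q.leadingCoeff := by
    conv_lhs => rw [hq]
    rw [coeff_C_mul, hp.coeff_natDegree, mul_one]
  rwa [hlc]

end Polynomial

namespace Matrix

variable {m R : Type*} [Fintype m] [DecidableEq m] [CommRing R]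

theorem natDegree_det_le_sum_of_natDegree_le (A : Matrix m m R[X]) (d : m → ℕ)
    (h : ∀ i j, (A i j).natDegree ≤ d i) : A.det.natDegree ≤ ∑ i, d i := by
  rw [← det_transpose, det_apply']
  refine natDegree_sum_le_of_forall_le _ _ fun σ _ => natDegree_mul_le.trans ?_
  rw [natDegree_intCast, zero_add]
  exact (natDegree_prod_le _ _).trans (sum_le_sum fun i _ => h i (σ i))

theorem coeff_det_sum_of_natDegree_le (A : Matrix m m R[X]) (d : m → ℕ)
    (h : ∀ i j, (A i j).natDegree ≤ d i) :
    A.det.coeff (∑ i, d i) = (of fun i j => (A i j).coeff (d i)).det := by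
  rw [← det_transpose, det_apply', ← det_transpose, det_apply', finsetSum_coeff]
  refine sum_congr rfl fun σ _ => ?_
  simp only [transpose_apply, of_apply]
  rw [coeff_intCast_mul, coeff_prod_sum_of_natDegree_le _ _ _ fun i _ => h i (σ i)]

theorem pow_card_dvd_det_of_dvd_sub_col (A : Matrix m m R) (r : R) (S : Finset m)
    (hS : ∀ j ∈ S, ∃ j' ∉ S, ∀ i, r ∣ A i j - A i j') : r ^ #S ∣ A.det := by
  induction S using Finset.induction_on generalizing A with
  | empty => simp
  | insert j S hj ih =>
    obtain ⟨j', hj', hdvd⟩ := hS j (mem_insert_self j S)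
    choose b hb using hdvd
    have hjj' : j ≠ j' := fun h => hj' (h ▸ mem_insert_self j S)
    have hA : A = A.updateCol j ((fun i => A i j') + r • b) := by
      ext i k
      rcases eq_or_ne k j with rfl | hk
      · simp [← hb]
      · simp [hk]
    have hdet : A.det = r * (A.updateCol j b).det := by
      conv_lhs => rw [hA]
      rw [det_updateCol_add, det_updateCol_smul,
        det_zero_of_column_eq hjj' (by simp [hjj'.symm]), zero_add]
    rw [hdet, card_insert_of_notMem hj, pow_succ']
    refine mul_dvd_mul_left r (ih _ fun k hk => ?_)
    obtain ⟨k', hk', hdvd⟩ := hS k (mem_insert_of_mem hk)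
    have hkj : k ≠ j := fun h => hj (h ▸ hk)
    have hk'j : k' ≠ j := fun h => hk' (h ▸ mem_insert_self j S)
    exact ⟨k', fun h => hk' (mem_insert_of_mem h), fun i => by
      simpa [updateCol_apply, hkj, hk'j] using hdvd i⟩

end Matrix

namespace Finset

variable {α : Type*}

theorem exists_equiv_getD_sort [DecidableEq α] (s : Finset α) (r : α → α → Prop) [DecidableRel r]
    [IsTrans α r] [Std.Antisymm r] [Std.Total r] {N : ℕ} (hN : #s = N) (a₀ : α) :
    ∃ e : Fin N ≃ s, ∀ i, (e i : α) = (s.sort r).getD i a₀ := by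
  subst hN
  refine ⟨(finCongr (length_sort r).symm).trans ((List.Nodup.getEquiv _ (sort_nodup s r)).trans
    (Equiv.subtypeEquivRight fun _ => mem_sort r)), fun i => ?_⟩
  simp

theorem sum_getD_sort [DecidableEq α] {β : Type*} [AddCommMonoid β] (s : Finset α)
    (r : α → α → Prop) [DecidableRel r] [IsTrans α r] [Std.Antisymm r] [Std.Total r] (a₀ : α)
    (f : α → β) : ∑ i : Fin #s, f ((s.sort r).getD i a₀) = ∑ a ∈ s, f a := by
  obtain ⟨e, he⟩ := s.exists_equiv_getD_sort r rfl a₀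
  simp only [← he]
  rw [e.sum_comp (fun a => f a), sum_coe_sort]

theorem two_mul_card_filter_lt_add_card (T : Finset α) (g : α → ℕ) (hg : Set.InjOn g T) :
    2 * #{p ∈ T ×ˢ T | g p.2 < g p.1} + #T = #T * #T := by
  classical
  have hswap : #{p ∈ T ×ˢ T | g p.1 < g p.2} = #{p ∈ T ×ˢ T | g p.2 < g p.1} :=
    card_equiv (Equiv.prodComm α α) fun p => by simp [and_comm]
  have hdiag : {p ∈ T ×ˢ T | g p.1 = g p.2} = T.diag := by
    ext ⟨a, b⟩
    simp only [mem_filter, mem_product, mem_diag]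
    exact ⟨fun h => ⟨h.1.1, hg h.1.1 h.1.2 h.2⟩, fun h => ⟨⟨h.1, h.2 ▸ h.1⟩, h.2 ▸ rfl⟩⟩
  have hlt : {p ∈ T ×ˢ T | ¬g p.2 < g p.1 ∧ g p.1 < g p.2} = {p ∈ T ×ˢ T | g p.1 < g p.2} :=
    filter_congr fun p _ => by omega
  have heq : {p ∈ T ×ˢ T | ¬g p.2 < g p.1 ∧ ¬g p.1 < g p.2} = {p ∈ T ×ˢ T | g p.1 = g p.2} :=
    filter_congr fun p _ => by omega
  have hsplit := card_filter_add_card_filter_not (s := T ×ˢ T) (fun p => g p.2 < g p.1)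
  have hsplit' := card_filter_add_card_filter_not (s := {p ∈ T ×ˢ T | ¬g p.2 < g p.1})
    (fun p => g p.1 < g p.2)
  rw [filter_filter, filter_filter, hlt, heq, hswap, hdiag, diag_card] at hsplit'
  rw [card_product] at hsplit
  omega

end Finset

namespace Capelli

variable {n d k : ℕ}

lemma mem_Pkn {μ : ℕ × ℕ} : μ ∈ Pkn n k ↔ μ.2 ≤ μ.1 ∧ μ.1 + μ.2 = k ∧ μ.2 ≤ n := by
  simp only [Pkn, mem_filter, mem_product, mem_range]
  omega

lemma mem_PknStar {ν : ℕ × ℕ} :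
    ν ∈ PknStar n k ↔ ν.2 ≤ ν.1 ∧ ν.1 + ν.2 = k ∧ k / 2 ≤ ν.2 + n := by
  simp only [PknStar, mem_filter, mem_product, mem_range]
  omega

lemma mem_LamStar {ν : ℕ × ℕ} :
    ν ∈ LamStar n d ↔ ν.2 ≤ ν.1 ∧ ν.1 + ν.2 ≤ d ∧ (ν.1 + ν.2) / 2 ≤ ν.2 + n := by
  simp only [LamStar, mem_biUnion, mem_range, mem_PknStar]
  exact ⟨fun ⟨k, hk, h⟩ => by omega, fun h => ⟨ν.1 + ν.2, by omega, by omega⟩⟩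

lemma pairwiseDisjoint_Pkn (s : Finset ℕ) : (s : Set ℕ).PairwiseDisjoint (Pkn n) :=
  fun k _ k' _ hkk' => disjoint_left.2 fun μ hμ hμ' => by
    rw [mem_Pkn] at hμ hμ'
    omega

lemma pairwiseDisjoint_PknStar (s : Finset ℕ) : (s : Set ℕ).PairwiseDisjoint (PknStar n) :=
  fun k _ k' _ hkk' => disjoint_left.2 fun ν hν hν' => by
    rw [mem_PknStar] at hν hν'
    omega

lemma Pkn_eq_image : Pkn n k = (range (min (k / 2) n + 1)).image fun a => (k - a, a) := by
  ext μ
  simp only [mem_Pkn, mem_image, mem_range, Prod.ext_iff]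
  exact ⟨fun h => ⟨μ.2, by omega⟩, fun ⟨a, h⟩ => by omega⟩

lemma PknStar_eq_image :
    PknStar n k = (range (min (k / 2) n + 1)).image fun a => (k - (k / 2 - a), k / 2 - a) := by
  ext ν
  simp only [mem_PknStar, mem_image, mem_range, Prod.ext_iff]
  exact ⟨fun h => ⟨k / 2 - ν.2, by omega⟩, fun ⟨a, h⟩ => by omega⟩

lemma sum_snd_Pkn : ∑ μ ∈ Pkn n k, μ.2 = ∑ a ∈ range (min (k / 2) n + 1), a := by
  rw [Pkn_eq_image, sum_image fun a _ b _ hab => (Prod.ext_iff.1 hab).2]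

lemma card_Pkn : #(Pkn n k) = min (k / 2) n + 1 := by
  rw [Pkn_eq_image, card_image_of_injOn fun a _ b _ hab => (Prod.ext_iff.1 hab).2, card_range]

lemma card_PknStar : #(PknStar n k) = min (k / 2) n + 1 := by
  rw [PknStar_eq_image, card_image_of_injOn, card_range]
  intro a ha b hb hab
  simp only [coe_range, Set.mem_Iio, Prod.ext_iff] at ha hb hab
  omega

lemma card_LamStar : #(LamStar n d) = #(Lam n d) := by
  rw [LamStar, Lam, card_biUnion (pairwiseDisjoint_PknStar _),
    card_biUnion (pairwiseDisjoint_Pkn _)]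
  simp only [card_Pkn, card_PknStar]

lemma ell_le (ν : ℕ × ℕ) : ell n ν ≤ n := by
  unfold ell
  omega

lemma ell_injOn_PknStar : Set.InjOn (ell n) (PknStar n k) := by
  intro ν hν ν' hν' h
  simp only [mem_coe, mem_PknStar] at hν hν'
  unfold ell at h
  exact Prod.ext (by omega) (by omega)

lemma sum_snd_Pkn_eq_card :
    ∑ μ ∈ Pkn n k, μ.2 = #{p ∈ PknStar n k ×ˢ PknStar n k | ell n p.2 < ell n p.1} := by
  have hpairs := (PknStar n k).two_mul_card_filter_lt_add_card (ell n) ell_injOn_PknStar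
  have hsum := sum_range_id_mul_two (min (k / 2) n + 1)
  rw [card_PknStar] at hpairs
  rw [Nat.add_sub_cancel] at hsum
  rw [sum_snd_Pkn]
  nlinarith

lemma sum_gks :
    ∑ s ∈ range (2 * n - 1), gks n k s =
      #{p ∈ PknStar n k ×ˢ PknStar n k | ell n p.2 < ell n p.1} := by
  rw [card_eq_sum_card_fiberwise (f := fun p => ell n p.1 + ell n p.2 - 1)
    (t := range (2 * n - 1))]
  · refine sum_congr rfl fun s _ => ?_
    rw [gks, filter_filter]
    exact congrArg card (filter_congr fun p _ => by omega)
  · intro p hp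
    have := ell_le (n := n) p.1
    simp only [coe_filter, Set.mem_ofPred_eq, coe_range, Set.mem_Iio] at hp ⊢
    omega

lemma fds_eq_sum_gks (s : ℤ) : fds n d s = ∑ k ∈ range (d + 1), gks n k s := by
  simp only [fds, gks]
  rw [← card_biUnion]
  · congr 1
    ext p
    simp only [mem_filter, mem_product, mem_biUnion, mem_range, mem_LamStar, mem_PknStar]
    exact ⟨fun h => ⟨p.1.1 + p.1.2, by omega⟩, fun ⟨k, h⟩ => by omega⟩
  · exact fun k hk k' hk' hkk' => disjoint_filter_filter <| disjoint_product.2 <|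
      Or.inl (pairwiseDisjoint_PknStar _ hk hk' hkk')

lemma sum_snd_Lam : ∑ μ ∈ Lam n d, μ.2 = ∑ s ∈ range (2 * n - 1), fds n d s := by
  simp only [Lam, sum_biUnion (pairwiseDisjoint_Pkn _), sum_snd_Pkn_eq_card, ← sum_gks,
    fds_eq_sum_gks]
  exact sum_comm

lemma natDegree_lamPoly_le (μ ν : ℕ × ℕ) : (lamPoly n μ ν).natDegree ≤ μ.2 := by
  unfold lamPoly
  compute_degree

lemma coeff_lamPoly (μ ν : ℕ × ℕ) :
    (lamPoly n μ ν).coeff μ.2 = (2 * ell n ν) ^ μ.2 * ((ν.1 + ν.2 : ℕ) : ℤ) ^ (μ.1 - μ.2) := by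
  have hbase : ((2 * X + 1) * C (ell n ν : ℤ) - C ((ell n ν : ℤ) ^ 2)).natDegree ≤ 1 := by
    compute_degree
  have hpow := coeff_pow_of_natDegree_le (m := μ.2) hbase
  rw [mul_one] at hpow
  rw [lamPoly, ← C_pow, coeff_mul_C, hpow, coeff_sub, coeff_mul_C, coeff_C]
  simp [coeff_one, mul_comm]

lemma dvd_lamPoly_sub_lamPoly (μ : ℕ × ℕ) {ν ν' : ℕ × ℕ} (h : ν.1 + ν.2 = ν'.1 + ν'.2) :
    2 * X - C ((ell n ν : ℤ) + ell n ν' - 1) ∣ lamPoly n μ ν - lamPoly n μ ν' := by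
  rw [lamPoly, lamPoly, h, ← sub_mul]
  refine dvd_mul_of_dvd_left
    (dvd_trans ⟨C ((ell n ν : ℤ) - ell n ν'), ?_⟩ (sub_dvd_pow_sub_pow ..)) _
  simp only [map_sub, map_add, map_pow, map_one]
  ring

lemma eq_of_ell_eq {ν ν' : ℕ × ℕ} (hν : ν ∈ LamStar n d) (hν' : ν' ∈ LamStar n d)
    (hsize : ν.1 + ν.2 = ν'.1 + ν'.2) (hell : ell n ν = ell n ν') : ν = ν' := by
  rw [mem_LamStar] at hν hν'
  exact ell_injOn_PknStar (k := ν.1 + ν.2) (mem_PknStar.2 (by omega)) (mem_PknStar.2 (by omega))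
    hell

def fdsPairs (n d : ℕ) (s : ℤ) : Finset ((ℕ × ℕ) × (ℕ × ℕ)) :=
  {p ∈ LamStar n d ×ˢ LamStar n d | p.1.1 + p.1.2 = p.2.1 + p.2.2 ∧ ell n p.2 < ell n p.1 ∧
    (ell n p.1 : ℤ) + ell n p.2 - 1 = s}

lemma fds_eq_card_fdsPairs (s : ℤ) : fds n d s = #(fdsPairs n d s) := rfl

lemma mem_fdsPairs {s : ℤ} {p : (ℕ × ℕ) × (ℕ × ℕ)} :
    p ∈ fdsPairs n d s ↔ p.1 ∈ LamStar n d ∧ p.2 ∈ LamStar n d ∧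
      p.1.1 + p.1.2 = p.2.1 + p.2.2 ∧ ell n p.2 < ell n p.1 ∧
      (ell n p.1 : ℤ) + ell n p.2 - 1 = s := by
  simp only [fdsPairs, mem_filter, mem_product, and_assoc]

lemma fdsPairs_fst_inj {s : ℤ} {p q : (ℕ × ℕ) × (ℕ × ℕ)} (hp : p ∈ fdsPairs n d s)
    (hq : q ∈ fdsPairs n d s) (h : p.1 = q.1) : p = q := by
  obtain ⟨-, hp2, hpsize, -, hps⟩ := mem_fdsPairs.1 hp
  obtain ⟨-, hq2, hqsize, -, hqs⟩ := mem_fdsPairs.1 hq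
  rw [h] at hpsize hps
  exact Prod.ext h (eq_of_ell_eq hp2 hq2 (by omega) (by omega))

lemma fdsPairs_snd_ne_fst {s : ℤ} {p q : (ℕ × ℕ) × (ℕ × ℕ)} (hp : p ∈ fdsPairs n d s)
    (hq : q ∈ fdsPairs n d s) : p.2 ≠ q.1 := by
  obtain ⟨-, -, -, hplt, hps⟩ := mem_fdsPairs.1 hp
  obtain ⟨-, -, -, hqlt, hqs⟩ := mem_fdsPairs.1 hq
  rintro h
  rw [h] at hplt hps
  omega

variable (n d)

lemma sum_snd_rowList :
    ∑ i : Fin #(Lam n d), ((rowList n d).getD i (0, 0)).2 = ∑ μ ∈ Lam n d, μ.2 :=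
  (Lam n d).sum_getD_sort rowRel (0, 0) Prod.snd

lemma natDegree_det_Md_le : (Md n d).det.natDegree ≤ ∑ μ ∈ Lam n d, μ.2 :=
  sum_snd_rowList n d ▸
    Matrix.natDegree_det_le_sum_of_natDegree_le _ _ fun _ _ => natDegree_lamPoly_le _ _

lemma coeff_det_Md : (Md n d).det.coeff (∑ μ ∈ Lam n d, μ.2) = (Md' n d).det := by
  rw [← sum_snd_rowList,
    Matrix.coeff_det_sum_of_natDegree_le (Md n d) _ fun _ _ => natDegree_lamPoly_le _ _]
  congr 1
  ext i j
  exact coeff_lamPoly _ _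

lemma pow_fds_dvd_det_Md (s : ℕ) : (2 * X - C (s : ℤ)) ^ fds n d s ∣ (Md n d).det := by
  obtain ⟨e, he⟩ := (LamStar n d).exists_equiv_getD_sort colRel card_LamStar (0, 0)
  let S : Finset (Fin #(Lam n d)) := {j | ∃ p ∈ fdsPairs n d s, p.1 = e j}
  have hcard : #S = #(fdsPairs n d s) := by
    refine (card_bij (fun p hp => e.symm ⟨p.1, (mem_fdsPairs.1 hp).1⟩) (fun p hp => ?_)
      (fun p hp q hq h => fdsPairs_fst_inj hp hq ?_) fun j hj => ?_).symm
    · exact mem_filter.2 ⟨mem_univ _, p, hp, by simp⟩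
    · simpa using congrArg Subtype.val (e.symm.injective h)
    · obtain ⟨p, hp, hpj⟩ := (mem_filter.1 hj).2
      exact ⟨p, hp, by simp [hpj]⟩
  have hcol (i j) : Md n d i j = lamPoly n ((rowList n d).getD i (0, 0)) (e j) := by
    rw [he]
    rfl
  rw [fds_eq_card_fdsPairs, ← hcard]
  refine Matrix.pow_card_dvd_det_of_dvd_sub_col _ _ S fun j hj => ?_
  obtain ⟨p, hp, hpj⟩ := (mem_filter.1 hj).2
  obtain ⟨-, hp2, hpsize, -, hps⟩ := mem_fdsPairs.1 hp
  refine ⟨e.symm ⟨p.2, hp2⟩, fun h => ?_, fun i => ?_⟩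
  · obtain ⟨q, hq, hqp⟩ := (mem_filter.1 h).2
    exact fdsPairs_snd_ne_fst hp hq (by simpa using hqp.symm)
  · rw [hcol, hcol, ← hpj, Equiv.apply_symm_apply]
    convert dvd_lamPoly_sub_lamPoly _ hpsize using 3
    omega

/-- For all nonnegative integers `n` and `d`, in `ℚ[x]` one has
`det(M_d) = det(M_d') · ∏_{s=0}^{2n-2} (x - s/2)^{f(d,s)}`. -/
theorem det_Md_factorization (n d : ℕ) :
    (Md n d).det.map (Int.castRingHom ℚ) =
      C ((Md' n d).det : ℚ) *
        ∏ s ∈ Finset.range (2 * n - 1), (X - C ((s : ℚ) / 2)) ^ fds n d (s : ℤ) := by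
  set Q := ∏ s ∈ range (2 * n - 1), (X - C ((s : ℚ) / 2)) ^ fds n d (s : ℤ)
  have hmonic (s : ℕ) : ((X - C ((s : ℚ) / 2)) ^ fds n d (s : ℤ)).Monic := (monic_X_sub_C _).pow _
  have hQ : Q.Monic := monic_prod_of_monic _ _ fun s _ => hmonic s
  have hdegQ : Q.natDegree = ∑ μ ∈ Lam n d, μ.2 := by
    rw [natDegree_prod_of_monic _ _ fun s _ => hmonic s, sum_snd_Lam]
    simp only [natDegree_pow, natDegree_X_sub_C, mul_one]
  have hdvd : Q ∣ (Md n d).det.map (Int.castRingHom ℚ) := by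
    have hinj : Function.Injective fun s : ℕ => (s : ℚ) / 2 := fun a b h => by simpa using h
    refine prod_dvd_of_coprime (fun a _ b _ hab => (pairwise_coprime_X_sub_C hinj hab).pow)
      fun s _ => ?_
    have hmap : (2 * X - C (s : ℤ)).map (Int.castRingHom ℚ) = C 2 * (X - C ((s : ℚ) / 2)) := by
      rw [mul_sub, ← C_mul, mul_div_cancel₀ _ two_ne_zero, C_ofNat]
      simp
    refine dvd_trans ?_ (map_dvd _ (pow_fds_dvd_det_Md n d s))
    rw [Polynomial.map_pow, hmap, mul_pow]
    exact dvd_mul_left _ _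
  rw [eq_C_coeff_mul_of_monic_of_dvd hQ hdvd
    (hdegQ ▸ (natDegree_map_le ..).trans (natDegree_det_Md_le n d)), hdegQ, coeff_map,
    coeff_det_Md]
  rfl

end Capelli
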